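/- Let V : 𝒳 → ℝ, W : 𝒳 × 𝒳 → ℝ, β > 0, and set K(x,p) = V(x) + β Σ_{y∈𝒳} W(x,y) p_y. With π_N the Gibbs measure on 𝒳^N associated to K and F̃_N(p) = (1/N) R(⊗^N p ‖ π_N), for every p ∈ 𝒫(𝒳), lim_{N→∞} F̃_N(p) = Σ_{x∈𝒳} ( V(x) + β Σ_{y∈𝒳} W(x,y) p_y + log p_x ) p_x − C, where C = inf_{q∈𝒫(𝒳)} { Σ_x q_x log q_x + Σ_x (V(x) + β Σ_y W(x,y) q_y) q_x } is a finite constant independent of p. -/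

import Mathlib

open scoped BigOperators
open Filter

/-- Empirical measure of a configuration `x ∈ 𝒳^N`. -/
noncomputable def empMeasure {d N : ℕ} (x : Fin N → Fin d) : Fin d → ℝ :=
  fun y => (1 / (N : ℝ)) * ∑ i, if x i = y then 1 else 0

/-- The `N`-particle energy `U_N(x) = ∑_i K(x_i, r^N(x))`. -/
noncomputable def energyU {d N : ℕ} (K : Fin d → (Fin d → ℝ) → ℝ)
    (x : Fin N → Fin d) : ℝ :=
  ∑ i, K (x i) (empMeasure x)

/-- The Gibbs measure `π_N(x) = Z_N⁻¹ exp(−U_N(x))` on `𝒳^N`. -/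
noncomputable def gibbsMeasure {d N : ℕ} (K : Fin d → (Fin d → ℝ) → ℝ)
    (x : Fin N → Fin d) : ℝ :=
  Real.exp (-(energyU K x)) / ∑ z : Fin N → Fin d, Real.exp (-(energyU K z))

/-- The product measure `⊗^N p` on `𝒳^N`. -/
noncomputable def productMeasure {d N : ℕ} (p : Fin d → ℝ)
    (x : Fin N → Fin d) : ℝ :=
  ∏ i, p (x i)

/-- Relative entropy of two probability vectors on `𝒳^N`
(convention `0 log 0 = 0`). -/
noncomputable def relEntN {d N : ℕ} (P Q : (Fin N → Fin d) → ℝ) : ℝ :=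
  ∑ x : Fin N → Fin d, P x * Real.log (P x / Q x)

/-- Scaled relative entropy `F̃_N(p) = (1/N) R(⊗^N p ‖ π_N)`. -/
noncomputable def tildeF {d : ℕ} (K : Fin d → (Fin d → ℝ) → ℝ) (N : ℕ)
    (p : Fin d → ℝ) : ℝ :=
  (1 / (N : ℝ)) * relEntN (productMeasure p) (gibbsMeasure (N := N) K)

/-! Since `π_N ∝ exp (-U_N)`, `R(⊗^N p ‖ π_N) = N ∑ p log p + E_{⊗^N p}[U_N] + log Z_N`, and for
affine `K` the mean energy is `N ∑_x K(x, p) p_x + O(1)`; so everything reduces to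
`(1/N) log Z_N → -C`.

Upper bound: `U_N(x) = N ∑_a K(a, r) r_a` with `r = r^N(x)`, and `⊗^N r (x) = exp (N ∑ r log r)`, so
`exp (-U_N(x)) ≤ exp (-N C) ⊗^N r (x)`. Grouping configurations by their empirical measure `r`,
each group has `⊗^N r`-mass at most one and there are at most `(N+1)^d` groups, so
`Z_N ≤ (N+1)^d exp (-N C)`.

Lower bound: the Gibbs variational inequality `∑ w (f - log w) ≤ log ∑ exp f` with `w = ⊗^N q`,
`q` a minimiser of the free energy, gives `log Z_N ≥ -N C - O(1)`. -/

open Real Finset Topology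

noncomputable def negEntropy {d : ℕ} (q : Fin d → ℝ) : ℝ :=
  ∑ a, q a * log (q a)

noncomputable def freeEnergy {d : ℕ} (K : Fin d → (Fin d → ℝ) → ℝ) (q : Fin d → ℝ) : ℝ :=
  negEntropy q + ∑ a, K a q * q a

noncomputable def partitionFn {d : ℕ} (K : Fin d → (Fin d → ℝ) → ℝ) (N : ℕ) : ℝ :=
  ∑ z : Fin N → Fin d, exp (-energyU K z)

noncomputable def meanEnergy {d : ℕ} (K : Fin d → (Fin d → ℝ) → ℝ) (N : ℕ) (q : Fin d → ℝ) : ℝ :=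
  1 / (N : ℝ) * ∑ x : Fin N → Fin d, productMeasure q x * energyU K x

theorem nonempty_of_mem_stdSimplex {ι : Type*} [Fintype ι] {p : ι → ℝ}
    (hp : p ∈ stdSimplex ℝ ι) : Nonempty ι := by
  obtain ⟨i, -⟩ := nonempty_of_sum_ne_zero (hp.2.symm ▸ one_ne_zero : ∑ i, p i ≠ 0)
  exact ⟨i⟩

theorem sum_mul_sub_log_le_log_sum_exp {ι : Type*} [Fintype ι] {w : ι → ℝ} (hw0 : ∀ i, 0 ≤ w i)
    (hw1 : ∑ i, w i = 1) (f : ι → ℝ) :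
    ∑ i, w i * (f i - log (w i)) ≤ log (∑ i, exp (f i)) := by
  have hne : (univ : Finset ι).Nonempty := nonempty_of_sum_ne_zero (by rw [hw1]; exact one_ne_zero)
  set Z := ∑ i, exp (f i)
  have hZ : 0 < Z := sum_pos (fun i _ => exp_pos _) hne
  have term : ∀ i, w i * (f i - log (w i)) ≤ w i * log Z + (exp (f i) / Z - w i) := by
    intro i
    rcases (hw0 i).eq_or_lt with h | h
    · rw [← h, zero_mul, zero_mul, zero_add, sub_zero]
      positivity
    · have := log_le_sub_one_of_pos (by positivity : 0 < exp (f i) / Z / w i)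
      rw [log_div (by positivity) h.ne', log_div (exp_ne_zero _) hZ.ne', log_exp] at this
      have := mul_le_mul_of_nonneg_left this h.le
      rw [mul_sub_one, mul_div_cancel₀ _ h.ne'] at this
      linarith
  calc _ ≤ ∑ i, (w i * log Z + (exp (f i) / Z - w i)) := sum_le_sum fun i _ => term i
    _ = log Z := by
      rw [sum_add_distrib, ← sum_mul, hw1, sum_sub_distrib, ← sum_div, div_self hZ.ne', hw1,
        sub_self, add_zero, one_mul]

section ProductMeasure

variable {d N : ℕ} {p : Fin d → ℝ}

theorem sum_productMeasure_mul_prod (hp : ∑ a, p a = 1) (s : Finset (Fin N))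
    (g : Fin N → Fin d → ℝ) :
    ∑ x, productMeasure p x * ∏ k ∈ s, g k (x k) = ∏ k ∈ s, ∑ a, p a * g k a := by
  have factor : ∀ x : Fin N → Fin d, productMeasure p x * ∏ k ∈ s, g k (x k)
      = ∏ k, p (x k) * if k ∈ s then g k (x k) else 1 := fun x => by
    rw [prod_mul_distrib, prod_ite_mem, univ_inter, productMeasure]
  simp_rw [factor]
  rw [← Fintype.prod_sum fun k a => p a * if k ∈ s then g k a else 1]
  calc _ = ∏ k, if k ∈ s then ∑ a, p a * g k a else 1 :=
        prod_congr rfl fun k _ => by split_ifs <;> simp [hp]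
    _ = _ := by rw [prod_ite_mem, univ_inter]

theorem sum_productMeasure (hp : ∑ a, p a = 1) : ∑ x : Fin N → Fin d, productMeasure p x = 1 := by
  simpa using sum_productMeasure_mul_prod (N := N) hp ∅ fun _ _ => 1

theorem sum_productMeasure_mul_apply (hp : ∑ a, p a = 1) (i : Fin N) (f : Fin d → ℝ) :
    ∑ x, productMeasure p x * f (x i) = ∑ a, p a * f a := by
  simpa using sum_productMeasure_mul_prod hp {i} fun _ => f

theorem sum_productMeasure_mul_apply_mul_apply (hp : ∑ a, p a = 1) {i j : Fin N} (hij : i ≠ j)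
    (f g : Fin d → ℝ) :
    ∑ x, productMeasure p x * (f (x i) * g (x j)) = (∑ a, p a * f a) * ∑ b, p b * g b := by
  simpa [prod_pair hij, hij.symm] using
    sum_productMeasure_mul_prod hp {i, j} fun k => if k = i then f else g

theorem sum_productMeasure_mul_apply₂ (hp : ∑ a, p a = 1) {i j : Fin N} (hij : i ≠ j)
    (g : Fin d → Fin d → ℝ) :
    ∑ x, productMeasure p x * g (x i) (x j) = ∑ a, ∑ b, p a * p b * g a b := by
  have split : ∀ x : Fin N → Fin d,
      g (x i) (x j) = ∑ a, (if x i = a then 1 else 0) * g a (x j) := by simp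
  simp_rw [split, mul_sum]
  rw [sum_comm]
  refine sum_congr rfl fun a _ => ?_
  rw [sum_productMeasure_mul_apply_mul_apply hp hij (fun c => if c = a then 1 else 0) (g a)]
  simp [mul_sum, mul_assoc]

theorem sum_productMeasure_mul_sum_sum (hp : ∑ a, p a = 1) (W : Fin d → Fin d → ℝ) :
    ∑ x, productMeasure p x * ∑ i : Fin N, ∑ j, W (x i) (x j)
      = N * (∑ a, p a * W a a + (N - 1) * ∑ a, ∑ b, p a * p b * W a b) := by
  have pair : ∀ i j : Fin N, ∑ x, productMeasure p x * W (x i) (x j)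
      = ∑ a, ∑ b, p a * p b * W a b
        + if j = i then ∑ a, p a * W a a - ∑ a, ∑ b, p a * p b * W a b else 0 := by
    intro i j
    split_ifs with hji
    · rw [hji, sum_productMeasure_mul_apply hp i fun a => W a a]
      ring
    · rw [sum_productMeasure_mul_apply₂ hp (Ne.symm hji), add_zero]
  simp_rw [mul_sum]
  rw [sum_comm]
  simp_rw [sum_comm (γ := Fin N → Fin d), ← mul_sum, pair, sum_add_distrib, sum_ite_eq']
  simp only [sum_const, card_univ, Fintype.card_fin, nsmul_eq_mul, mem_univ, ↓reduceIte]
  ring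

end ProductMeasure

section EmpiricalMeasure

variable {d N : ℕ}

theorem sum_empMeasure_mul (x : Fin N → Fin d) (f : Fin d → ℝ) :
    ∑ a, empMeasure x a * f a = (1 / (N : ℝ)) * ∑ i, f (x i) := by
  simp_rw [empMeasure, mul_assoc, sum_mul, ite_mul, one_mul, zero_mul, ← mul_sum]
  rw [sum_comm]
  simp

theorem energyU_eq_mul_sum_empMeasure (K : Fin d → (Fin d → ℝ) → ℝ) (x : Fin N → Fin d) :
    energyU K x = N * ∑ a, K a (empMeasure x) * empMeasure x a := by
  rcases eq_or_ne N 0 with rfl | hN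
  · simp [energyU]
  · simp_rw [mul_comm (K _ _), sum_empMeasure_mul, energyU]
    field_simp

theorem empMeasure_mem_stdSimplex (hN : N ≠ 0) (x : Fin N → Fin d) :
    empMeasure x ∈ stdSimplex ℝ (Fin d) := by
  refine ⟨fun a => by unfold empMeasure; positivity, ?_⟩
  simpa [hN] using sum_empMeasure_mul x 1

theorem empMeasure_apply_self_pos (x : Fin N → Fin d) (i : Fin N) : 0 < empMeasure x (x i) := by
  have : (0 : ℝ) < N := by exact_mod_cast i.pos
  unfold empMeasure
  exact mul_pos (by positivity) (sum_pos' (fun j _ => by positivity) ⟨i, mem_univ i, by simp⟩)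

theorem productMeasure_empMeasure (x : Fin N → Fin d) :
    productMeasure (empMeasure x) x = exp (N * negEntropy (empMeasure x)) := by
  rcases eq_or_ne N 0 with rfl | hN
  · simp [productMeasure]
  · rw [negEntropy, sum_empMeasure_mul, ← mul_assoc, mul_one_div_cancel (by positivity), one_mul,
      exp_sum, productMeasure]
    exact prod_congr rfl fun i _ => (exp_log (empMeasure_apply_self_pos x i)).symm

theorem card_image_empMeasure_le :
    #(univ.image (empMeasure : (Fin N → Fin d) → Fin d → ℝ)) ≤ (N + 1) ^ d := by
  classical
  let ofCounts : (Fin d → Fin (N + 1)) → Fin d → ℝ := fun n a => 1 / (N : ℝ) * n a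
  have hsub : univ.image (empMeasure : (Fin N → Fin d) → Fin d → ℝ) ⊆ univ.image ofCounts := by
    intro r hr
    obtain ⟨x, -, rfl⟩ := mem_image.1 hr
    have count_lt : ∀ a, #{i | x i = a} < N + 1 := fun a =>
      Nat.lt_succ_of_le ((card_filter_le _ _).trans_eq (card_fin N))
    refine mem_image.2 ⟨fun a => ⟨_, count_lt a⟩, mem_univ _, funext fun a => ?_⟩
    simp [ofCounts, empMeasure, sum_boole]
  calc _ ≤ #(univ.image ofCounts) := card_le_card hsub
    _ ≤ #(univ : Finset (Fin d → Fin (N + 1))) := card_image_le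
    _ = (N + 1) ^ d := by simp

theorem sum_productMeasure_empMeasure_le (hN : N ≠ 0) :
    ∑ x : Fin N → Fin d, productMeasure (empMeasure x) x ≤ (N + 1) ^ d := by
  classical
  let types := univ.image (empMeasure : (Fin N → Fin d) → Fin d → ℝ)
  have fiber_le : ∀ r ∈ types,
      ∑ x ∈ {x : Fin N → Fin d | empMeasure x = r}, productMeasure (empMeasure x) x ≤ 1 := by
    intro r hr
    obtain ⟨x₀, -, rfl⟩ := mem_image.1 hr
    have hr := empMeasure_mem_stdSimplex hN x₀
    calc _ = ∑ x ∈ {x | empMeasure x = empMeasure x₀}, productMeasure (empMeasure x₀) x :=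
          sum_congr rfl fun x hx => by rw [(mem_filter.1 hx).2]
      _ ≤ ∑ x, productMeasure (empMeasure x₀) x :=
          sum_le_sum_of_subset_of_nonneg (filter_subset _ _) fun x _ _ =>
            prod_nonneg fun i _ => hr.1 (x i)
      _ = 1 := sum_productMeasure hr.2
  calc _ = ∑ r ∈ types,
          ∑ x ∈ {x : Fin N → Fin d | empMeasure x = r}, productMeasure (empMeasure x) x :=
        (sum_fiberwise_of_maps_to (fun x _ => mem_image_of_mem _ (mem_univ x)) _).symm
    _ ≤ ∑ _r ∈ types, (1 : ℝ) := sum_le_sum fiber_le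
    _ ≤ (N + 1) ^ d := by
      exact_mod_cast (card_eq_sum_ones types).symm.le.trans card_image_empMeasure_le

end EmpiricalMeasure

section PartitionFunction

variable {d N : ℕ} (K : Fin d → (Fin d → ℝ) → ℝ)

theorem sum_productMeasure_mul_log {p : Fin d → ℝ} (hp : ∑ a, p a = 1) :
    ∑ x : Fin N → Fin d, productMeasure p x * log (productMeasure p x) = N * negEntropy p := by
  have split : ∀ x : Fin N → Fin d,
      productMeasure p x * log (productMeasure p x) = ∑ i, productMeasure p x * log (p (x i)) := by
    intro x
    by_cases h : productMeasure p x = 0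
    · simp [h]
    · rw [productMeasure, log_prod fun i _ hi => h (prod_eq_zero (mem_univ i) hi), mul_sum]
  simp_rw [split]
  rw [sum_comm, sum_congr rfl fun i _ => sum_productMeasure_mul_apply hp i fun a => log (p a)]
  simp [negEntropy]

theorem relEntN_gibbsMeasure [Nonempty (Fin d)] {P : (Fin N → Fin d) → ℝ} (hP : ∑ x, P x = 1) :
    relEntN P (gibbsMeasure K)
      = ∑ x, P x * log (P x) + ∑ x, P x * energyU K x + log (partitionFn K N) := by
  have hZ : 0 < partitionFn K N := sum_pos (fun z _ => exp_pos _) univ_nonempty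
  have term : ∀ x, P x * log (P x / gibbsMeasure K x)
      = P x * log (P x) + P x * energyU K x + P x * log (partitionFn K N) := by
    intro x
    by_cases h : P x = 0
    · simp [h]
    · rw [gibbsMeasure, ← partitionFn, log_div h (by positivity), log_div (exp_ne_zero _) hZ.ne',
        log_exp]
      ring
  rw [relEntN, sum_congr rfl fun x _ => term x, sum_add_distrib, sum_add_distrib, ← sum_mul, hP,
    one_mul]

theorem tildeF_eq_negEntropy_add_meanEnergy_add [Nonempty (Fin d)] (hN : N ≠ 0) {p : Fin d → ℝ}
    (hp : p ∈ stdSimplex ℝ (Fin d)) :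
    tildeF K N p = negEntropy p + meanEnergy K N p + log (partitionFn K N) / N := by
  rw [tildeF, relEntN_gibbsMeasure K (sum_productMeasure hp.2), sum_productMeasure_mul_log hp.2,
    meanEnergy]
  field_simp

theorem le_log_partitionFn_div (hN : N ≠ 0) {q : Fin d → ℝ} (hq : q ∈ stdSimplex ℝ (Fin d)) :
    -(negEntropy q + meanEnergy K N q) ≤ log (partitionFn K N) / N := by
  have gibbs := sum_mul_sub_log_le_log_sum_exp (w := productMeasure q)
    (fun x => prod_nonneg fun i _ => hq.1 (x i))
    (sum_productMeasure (N := N) hq.2) fun x => -energyU K x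
  simp only [mul_sub, sum_sub_distrib, mul_neg, sum_neg_distrib,
    sum_productMeasure_mul_log hq.2] at gibbs
  rw [le_div_iff₀ (by positivity), meanEnergy, partitionFn]
  field_simp
  linarith [gibbs]

theorem partitionFn_le (hN : N ≠ 0) {C : ℝ} (hC : ∀ q ∈ stdSimplex ℝ (Fin d), C ≤ freeEnergy K q) :
    partitionFn K N ≤ (N + 1) ^ d * exp (-(N * C)) := by
  have term : ∀ x : Fin N → Fin d,
      exp (-energyU K x) ≤ exp (-(N * C)) * productMeasure (empMeasure x) x := by
    intro x
    have := hC _ (empMeasure_mem_stdSimplex hN x)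
    rw [productMeasure_empMeasure, ← exp_add, exp_le_exp, energyU_eq_mul_sum_empMeasure]
    rw [freeEnergy] at this
    nlinarith [(Nat.cast_nonneg N : (0 : ℝ) ≤ N)]
  calc _ ≤ ∑ x : Fin N → Fin d, exp (-(N * C)) * productMeasure (empMeasure x) x :=
        sum_le_sum fun x _ => term x
    _ ≤ _ := by
      rw [← mul_sum, mul_comm]
      exact mul_le_mul_of_nonneg_right (sum_productMeasure_empMeasure_le hN) (exp_pos _).le

theorem log_partitionFn_div_le [Nonempty (Fin d)] (hN : N ≠ 0) {C : ℝ}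
    (hC : ∀ q ∈ stdSimplex ℝ (Fin d), C ≤ freeEnergy K q) :
    log (partitionFn K N) / N ≤ d * (log (N + 1) / N) - C := by
  have hZ : 0 < partitionFn K N := sum_pos (fun z _ => exp_pos _) univ_nonempty
  have := log_le_log hZ (partitionFn_le K hN hC)
  rw [log_mul (by positivity) (exp_ne_zero _), log_pow, log_exp] at this
  rw [div_le_iff₀ (by positivity)]
  field_simp
  linarith

end PartitionFunction

section Limit

variable {d : ℕ} {K : Fin d → (Fin d → ℝ) → ℝ}

theorem continuous_freeEnergy (hKc : ∀ a, Continuous (K a)) : Continuous (freeEnergy K) := by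
  unfold freeEnergy negEntropy
  fun_prop (disch := exact continuous_mul_log)

theorem tendsto_log_add_one_div_atTop :
    Tendsto (fun N : ℕ => log ((N : ℝ) + 1) / N) atTop (𝓝 0) := by
  have := (tendsto_pow_log_div_mul_add_atTop 1 (-1) 1 one_ne_zero).comp
    (tendsto_atTop_add_const_right _ 1 tendsto_natCast_atTop_atTop)
  refine this.congr fun N => ?_
  simp

theorem tendsto_log_partitionFn_div [Nonempty (Fin d)] (hKc : ∀ a, Continuous (K a))
    (hmean : ∀ q ∈ stdSimplex ℝ (Fin d),
      Tendsto (fun N => meanEnergy K N q) atTop (𝓝 (∑ a, K a q * q a))) :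
    Tendsto (fun N => log (partitionFn K N) / N) atTop
      (𝓝 (-sInf (freeEnergy K '' stdSimplex ℝ (Fin d)))) := by
  obtain ⟨q, hq, hmin⟩ := (isCompact_stdSimplex ℝ (Fin d)).exists_isMinOn
    (Set.nonempty_coe_sort.1 inferInstance)
    (continuous_freeEnergy hKc).continuousOn
  have hC : sInf (freeEnergy K '' stdSimplex ℝ (Fin d)) = freeEnergy K q :=
    IsLeast.csInf_eq ⟨Set.mem_image_of_mem _ hq, Set.forall_mem_image.2 hmin⟩
  rw [hC]
  have lower : Tendsto (fun N => -(negEntropy q + meanEnergy K N q)) atTop (𝓝 (-freeEnergy K q)) :=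
    ((hmean q hq).const_add _).neg
  have upper : Tendsto (fun N : ℕ => d * (log (N + 1) / N) - freeEnergy K q) atTop
      (𝓝 (-freeEnergy K q)) := by
    simpa using (tendsto_log_add_one_div_atTop.const_mul (d : ℝ)).sub_const (freeEnergy K q)
  refine tendsto_of_tendsto_of_tendsto_of_le_of_le' lower upper ?_ ?_ <;>
    filter_upwards [eventually_ne_atTop 0] with N hN
  · exact le_log_partitionFn_div K hN hq
  · exact log_partitionFn_div_le K hN hmin

theorem tendsto_tildeF (hKc : ∀ a, Continuous (K a))
    (hmean : ∀ q ∈ stdSimplex ℝ (Fin d),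
      Tendsto (fun N => meanEnergy K N q) atTop (𝓝 (∑ a, K a q * q a)))
    {p : Fin d → ℝ} (hp : p ∈ stdSimplex ℝ (Fin d)) :
    Tendsto (fun N => tildeF K N p) atTop
      (𝓝 (freeEnergy K p - sInf (freeEnergy K '' stdSimplex ℝ (Fin d)))) := by
  have := nonempty_of_mem_stdSimplex hp
  have := ((hmean p hp).const_add (negEntropy p)).add (tendsto_log_partitionFn_div hKc hmean)
  rw [freeEnergy, sub_eq_add_neg]
  refine this.congr' ?_
  filter_upwards [eventually_ne_atTop 0] with N hN
  exact (tildeF_eq_negEntropy_add_meanEnergy_add K hN hp).symm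

end Limit

section Affine

variable {d N : ℕ} {V : Fin d → ℝ} {W : Fin d → Fin d → ℝ} {β : ℝ} {K : Fin d → (Fin d → ℝ) → ℝ}

theorem energyU_eq_of_affine (hK : ∀ x q, K x q = V x + β * ∑ y, W x y * q y) (x : Fin N → Fin d) :
    energyU K x = ∑ i, V (x i) + β / N * ∑ i, ∑ j, W (x i) (x j) := by
  have inner : ∀ a, ∑ y, W a y * empMeasure x y = 1 / N * ∑ j, W a (x j) := fun a => by
    simp_rw [mul_comm (W a _)]
    exact sum_empMeasure_mul x (W a)
  simp only [energyU, hK, inner, sum_add_distrib, mul_sum, ← mul_assoc, mul_one_div]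

theorem sum_mul_eq_of_affine (hK : ∀ x q, K x q = V x + β * ∑ y, W x y * q y) (q : Fin d → ℝ) :
    ∑ a, K a q * q a = ∑ a, q a * V a + β * ∑ a, ∑ b, q a * q b * W a b := by
  simp only [hK, add_mul, sum_add_distrib, mul_sum, sum_mul]
  congr 1
  · exact sum_congr rfl fun a _ => mul_comm _ _
  · exact sum_congr rfl fun a _ => sum_congr rfl fun b _ => by ring

theorem meanEnergy_eq_of_affine (hK : ∀ x q, K x q = V x + β * ∑ y, W x y * q y)
    {q : Fin d → ℝ} (hq : ∑ a, q a = 1) (hN : N ≠ 0) :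
    meanEnergy K N q = ∑ a, K a q * q a
      + β / N * (∑ a, q a * W a a - ∑ a, ∑ b, q a * q b * W a b) := by
  have potential :
      ∑ x : Fin N → Fin d, productMeasure q x * ∑ i, V (x i) = N * ∑ a, q a * V a := by
    simp_rw [mul_sum]
    rw [sum_comm, sum_congr rfl fun i _ => sum_productMeasure_mul_apply hq i V, sum_const,
      card_univ, Fintype.card_fin, nsmul_eq_mul, mul_sum]
  simp_rw [meanEnergy, energyU_eq_of_affine hK, mul_add, sum_add_distrib, potential,
    mul_left_comm _ (β / N), ← mul_sum, sum_productMeasure_mul_sum_sum hq, sum_mul_eq_of_affine hK]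
  field_simp
  ring

theorem tendsto_meanEnergy_of_affine (hK : ∀ x q, K x q = V x + β * ∑ y, W x y * q y)
    {q : Fin d → ℝ} (hq : ∑ a, q a = 1) :
    Tendsto (fun N => meanEnergy K N q) atTop (𝓝 (∑ a, K a q * q a)) := by
  have := ((tendsto_const_div_atTop_nhds_zero_nat β).mul_const
    (∑ a, q a * W a a - ∑ a, ∑ b, q a * q b * W a b)).const_add (∑ a, K a q * q a)
  rw [zero_mul, add_zero] at this
  refine this.congr' ?_
  filter_upwards [eventually_ne_atTop 0] with N hN
  exact (meanEnergy_eq_of_affine hK hq hN).symm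

end Affine

theorem affine_gibbs_relative_entropy_limit_general
    (d : ℕ)
    (V : Fin d → ℝ) (W : Fin d → Fin d → ℝ) (β : ℝ)
    (K : Fin d → (Fin d → ℝ) → ℝ)
    (hK : ∀ x : Fin d, ∀ q : Fin d → ℝ, K x q = V x + β * ∑ y, W x y * q y)
    (p : Fin d → ℝ) (hp : p ∈ stdSimplex ℝ (Fin d)) :
    Tendsto (fun N : ℕ => tildeF K N p) atTop
      (nhds ((∑ x, (V x + β * (∑ y, W x y * p y) + Real.log (p x)) * p x)
        - sInf { v : ℝ | ∃ q ∈ stdSimplex ℝ (Fin d),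
            v = ∑ x, q x * Real.log (q x)
              + ∑ x, (V x + β * ∑ y, W x y * q y) * q x })) := by
  have hKc : ∀ a, Continuous (K a) := fun a => by
    rw [show K a = fun q => V a + β * ∑ y, W a y * q y from funext (hK a)]
    fun_prop
  convert tendsto_tildeF hKc (fun q hq => tendsto_meanEnergy_of_affine hK hq.2) hp using 3
  · simp only [freeEnergy, negEntropy, hK, add_mul, sum_add_distrib, mul_comm (log _)]
    ring
  · congr 1
    ext v
    simp only [freeEnergy, negEntropy, hK, Set.mem_image, Set.mem_ofPred_eq, eq_comm]

/-- For the affine Gibbs model `K(x,p) = V(x) + β ∑_y W(x,y) p_y`, for every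
`p ∈ 𝒫(𝒳)`,
`lim_{N→∞} F̃_N(p) = ∑_x (V(x) + β ∑_y W(x,y) p_y + log p_x) p_x − C`,
where `C = inf_{q ∈ 𝒫(𝒳)} {∑ q_x log q_x + ∑ (V(x) + β ∑_y W(x,y) q_y) q_x}`
is a finite constant independent of `p`. -/
theorem affine_gibbs_relative_entropy_limit
    (d : ℕ) (hd : 2 ≤ d)
    (V : Fin d → ℝ) (W : Fin d → Fin d → ℝ) (β : ℝ) (hβ : 0 < β)
    (K : Fin d → (Fin d → ℝ) → ℝ)
    (hK : ∀ x : Fin d, ∀ q : Fin d → ℝ, K x q = V x + β * ∑ y, W x y * q y)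
    (p : Fin d → ℝ) (hp : p ∈ stdSimplex ℝ (Fin d)) :
    Tendsto (fun N : ℕ => tildeF K N p) atTop
      (nhds ((∑ x, (V x + β * (∑ y, W x y * p y) + Real.log (p x)) * p x)
        - sInf { v : ℝ | ∃ q ∈ stdSimplex ℝ (Fin d),
            v = ∑ x, q x * Real.log (q x)
              + ∑ x, (V x + β * ∑ y, W x y * q y) * q x })) :=
  affine_gibbs_relative_entropy_limit_general d V W β K hK p hp
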